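/- arXiv:1402.2040 — 6 statements merged into one kernel-verified Lean document; each statement's English description precedes it below -/
import Mathlib

section
/- For integers n > k ≥ 0, S(n,k) = C(n,k) · Σ_{ℓ=1}^{n-k} (-1)^ℓ · [C(k,ℓ)/C(n-k+ℓ, n-k)] · Σ_{i=0}^{ℓ} (-1)^i · C(n-k+ℓ, ℓ-i) · S(n-k+i, i). -/
/-!
In a partition of `m + k` elements into `k` blocks, the blocks of size at least two cover
`m + j` elements in `j` blocks for some `j` and the rest are singletons; hence
`S(m + k, k) = ∑ⱼ B(m, j) C(m + k, m + j)` with `B` the associated Stirling numbers.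
Binomial inversion along the diagonal identifies the inner alternating sum of the theorem with
`(-1)^ℓ B(m, ℓ)`, and `C(m + k, k) C(k, ℓ) = C(m + k, m + ℓ) C(m + ℓ, m)` turns the outer sum
back into that expansion; the `j = 0` term vanishes because `m ≥ 1`.
-/

/-- Stirling numbers of the second kind. -/
def S : ℕ → ℕ → ℕ
  | 0, 0 => 1
  | 0, _ + 1 => 0
  | _ + 1, 0 => 0
  | n + 1, k + 1 => (k + 1) * S n (k + 1) + S n k

open Finset

theorem S_eq_stirlingSecond : ∀ n k, S n k = Nat.stirlingSecond n k
  | 0, 0 | 0, _ + 1 | _ + 1, 0 => rfl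
  | n + 1, k + 1 => by
    rw [S, Nat.stirlingSecond_succ_succ, S_eq_stirlingSecond n (k + 1), S_eq_stirlingSecond n k]

/-- `assocStirlingSecond m j` counts the partitions of an `(m + j)`-element set into `j` blocks
of size at least two. -/
def assocStirlingSecond : ℕ → ℕ → ℕ
  | 0, 0 => 1
  | 0, _ + 1 => 0
  | _ + 1, 0 => 0
  | m + 1, j + 1 =>
    (j + 1) * assocStirlingSecond m (j + 1) + (m + j + 1) * assocStirlingSecond m j

@[simp]
theorem assocStirlingSecond_succ_zero (m : ℕ) : assocStirlingSecond (m + 1) 0 = 0 := rfl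

theorem assocStirlingSecond_succ_succ (m j : ℕ) :
    assocStirlingSecond (m + 1) (j + 1) =
      (j + 1) * assocStirlingSecond m (j + 1) + (m + j + 1) * assocStirlingSecond m j := rfl

theorem assocStirlingSecond_zero_right {m : ℕ} (hm : m ≠ 0) : assocStirlingSecond m 0 = 0 := by
  obtain ⟨m, rfl⟩ := Nat.exists_eq_succ_of_ne_zero hm
  rfl

theorem assocStirlingSecond_eq_zero_of_lt : ∀ {m j : ℕ}, m < j → assocStirlingSecond m j = 0
  | _, 0, h => absurd h (Nat.not_lt_zero _)
  | 0, _ + 1, _ => rfl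
  | m + 1, j + 1, h => by
    rw [assocStirlingSecond_succ_succ, assocStirlingSecond_eq_zero_of_lt (by omega : m < j + 1),
      assocStirlingSecond_eq_zero_of_lt (by omega : m < j), mul_zero, mul_zero, add_zero]

theorem sum_assocStirlingSecond_succ_mul {R : Type*} [CommSemiring R] (m : ℕ) (f : ℕ → R) :
    ∑ j ∈ range (m + 2), (assocStirlingSecond (m + 1) j : R) * f j =
      ∑ j ∈ range (m + 1),
        (assocStirlingSecond m j : R) * (j * f j + (m + j + 1) * f (j + 1)) := by
  set g : ℕ → R := fun j ↦ (j : R) * assocStirlingSecond m j * f j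
  have shift : ∑ j ∈ range (m + 1), g (j + 1) = ∑ j ∈ range (m + 1), g j := by
    have h := sum_range_succ' g (m + 1)
    have hzero : g 0 = 0 := by simp [g]
    have htop : g (m + 1) = 0 := by simp [g, assocStirlingSecond_eq_zero_of_lt (Nat.lt_succ_self m)]
    rw [sum_range_succ, hzero, htop, add_zero, add_zero] at h
    exact h.symm
  rw [sum_range_succ', assocStirlingSecond_succ_zero, Nat.cast_zero, zero_mul, add_zero]
  calc ∑ j ∈ range (m + 1), (assocStirlingSecond (m + 1) (j + 1) : R) * f (j + 1)
      = ∑ j ∈ range (m + 1),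
          (g (j + 1) + assocStirlingSecond m j * ((m + j + 1) * f (j + 1))) :=
        sum_congr rfl fun j _ ↦ by simp only [g, assocStirlingSecond_succ_succ]; push_cast; ring
    _ = ∑ j ∈ range (m + 1), (g j + assocStirlingSecond m j * ((m + j + 1) * f (j + 1))) := by
        rw [sum_add_distrib, shift, sum_add_distrib]
    _ = _ := sum_congr rfl fun j _ ↦ by simp only [g]; ring

theorem mul_choose_add_add_one_mul_choose_add_one (N a j : ℕ) :
    j * N.choose (a + j) + (a + j + 1) * N.choose (a + j + 1) = (N - a) * N.choose (a + j) := by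
  rcases le_or_gt (a + j) N with h | h
  · rw [mul_comm (a + j + 1), Nat.choose_succ_right_eq, mul_comm _ (N - (a + j)), ← add_mul]
    congr 1
    omega
  · simp [Nat.choose_eq_zero_of_lt h, Nat.choose_eq_zero_of_lt (Nat.lt_succ_of_lt h)]

theorem sum_assocStirlingSecond_succ_mul_choose (N m : ℕ) :
    ∑ j ∈ range (m + 2), assocStirlingSecond (m + 1) j * N.choose (m + j) =
      (N - m) * ∑ j ∈ range (m + 1), assocStirlingSecond m j * N.choose (m + j) := by
  have h := sum_assocStirlingSecond_succ_mul m fun j ↦ N.choose (m + j)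
  simp only [Nat.cast_id] at h
  rw [h, mul_sum]
  refine sum_congr rfl fun j _ ↦ ?_
  rw [← add_assoc, mul_choose_add_add_one_mul_choose_add_one]
  ring

theorem stirlingSecond_add_eq_sum (m k : ℕ) :
    Nat.stirlingSecond (m + k) k =
      ∑ j ∈ range (m + 1), assocStirlingSecond m j * (m + k).choose (m + j) := by
  induction m generalizing k with
  | zero => simp [Nat.stirlingSecond_self, assocStirlingSecond]
  | succ m ihm =>
    induction k with
    | zero =>
      refine (sum_eq_zero fun j _ ↦ ?_).symm
      rcases j with _ | j
      · simp
      · simp [Nat.choose_eq_zero_of_lt (by omega : m + 1 + 0 < m + 1 + (j + 1))]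
    | succ k ihk =>
      have hrec : Nat.stirlingSecond (m + 1 + (k + 1)) (k + 1) =
          (k + 1) * Nat.stirlingSecond (m + (k + 1)) (k + 1) +
            Nat.stirlingSecond (m + 1 + k) k := by
        rw [← add_assoc, Nat.stirlingSecond_succ_succ, Nat.add_right_comm m 1 k, add_assoc m k]
      have hpascal (j : ℕ) : (m + 1 + (k + 1)).choose (m + 1 + j) =
          (m + k + 1).choose (m + j) + (m + 1 + k).choose (m + 1 + j) := by
        simp only [← add_assoc, Nat.add_right_comm m 1, Nat.choose_succ_succ']
      rw [hrec, ihm, ihk]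
      simp only [hpascal, mul_add, sum_add_distrib, sum_assocStirlingSecond_succ_mul_choose]
      rw [show m + k + 1 - m = k + 1 by omega, ← add_assoc]

theorem Nat.add_choose_mul_choose (m k ℓ : ℕ) :
    (m + k).choose k * k.choose ℓ = (m + k).choose (m + ℓ) * (m + ℓ).choose m := by
  rw [Nat.choose_mul (Nat.le_add_right m ℓ), Nat.add_sub_cancel_left, Nat.add_sub_cancel_left,
    Nat.choose_symm_add]

theorem Nat.choose_sub_mul_choose_add (m ℓ j t : ℕ) (h : j + t ≤ ℓ) :
    (m + ℓ).choose (ℓ - (j + t)) * (m + (j + t)).choose (m + j) =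
      (m + ℓ).choose (m + j) * (ℓ - j).choose t := by
  rw [Nat.choose_symm_of_eq_add (by omega : m + ℓ = ℓ - (j + t) + (m + (j + t))),
    Nat.choose_mul (by omega), show m + ℓ - (m + j) = ℓ - j by omega,
    show m + (j + t) - (m + j) = t by omega]

theorem alternating_sum_range_choose {R : Type*} [CommRing R] (n : ℕ) :
    ∑ i ∈ range (n + 1), (-1 : R) ^ i * (n.choose i : R) = if n = 0 then 1 else 0 := by
  have h := congrArg (Int.cast : ℤ → R) (Int.alternating_sum_range_choose (n := n))
  push_cast at h
  exact h

theorem sum_neg_one_pow_mul_choose_mul_choose {R : Type*} [CommRing R] (m ℓ j : ℕ) :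
    ∑ i ∈ range (ℓ + 1),
        (-1 : R) ^ i * ((m + ℓ).choose (ℓ - i) : R) * ((m + i).choose (m + j) : R) =
      if j = ℓ then (-1 : R) ^ ℓ else 0 := by
  have hvanish (i : ℕ) (hi : i < j) :
      (-1 : R) ^ i * ((m + ℓ).choose (ℓ - i) : R) * ((m + i).choose (m + j) : R) = 0 := by
    simp [Nat.choose_eq_zero_of_lt (by omega : m + i < m + j)]
  rcases lt_or_ge ℓ j with hlt | hle
  · rw [if_neg hlt.ne', sum_eq_zero fun i hi ↦ hvanish i (by have := mem_range.1 hi; omega)]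
  have hterm : ∀ t ∈ range (ℓ - j + 1),
      (-1 : R) ^ (j + t) * ((m + ℓ).choose (ℓ - (j + t)) : R) *
          ((m + (j + t)).choose (m + j) : R) =
        (-1 : R) ^ j * ((m + ℓ).choose (m + j) : R) *
          ((-1 : R) ^ t * ((ℓ - j).choose t : R)) := by
    intro t ht
    have h := congrArg (Nat.cast : ℕ → R)
      (Nat.choose_sub_mul_choose_add m ℓ j t (by have := mem_range.1 ht; omega))
    push_cast at h
    rw [pow_add]
    linear_combination (-1 : R) ^ j * (-1 : R) ^ t * h
  -- only `i = j + t` contributes, and there the binomials factor as `C(m + ℓ, m + j) C(ℓ - j, t)`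
  rw [← sum_range_add_sum_Ico _ (by omega : j ≤ ℓ + 1),
    sum_eq_zero fun i hi ↦ hvanish i (by simpa using hi), zero_add, sum_Ico_eq_sum_range,
    show ℓ + 1 - j = ℓ - j + 1 by omega, sum_congr rfl hterm,
    ← mul_sum, alternating_sum_range_choose]
  rcases eq_or_lt_of_le hle with rfl | hlt
  · simp
  · simp [hlt.ne, Nat.sub_ne_zero_of_lt hlt]

theorem sum_neg_one_pow_mul_choose_mul_stirlingSecond {R : Type*} [CommRing R] (m ℓ : ℕ) :
    ∑ i ∈ range (ℓ + 1),
        (-1 : R) ^ i * ((m + ℓ).choose (ℓ - i) : R) * (Nat.stirlingSecond (m + i) i : R) =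
      (-1 : R) ^ ℓ * assocStirlingSecond m ℓ := by
  calc _ = ∑ j ∈ range (m + 1), (assocStirlingSecond m j : R) * ∑ i ∈ range (ℓ + 1),
          (-1 : R) ^ i * ((m + ℓ).choose (ℓ - i) : R) * ((m + i).choose (m + j) : R) := by
        simp only [stirlingSecond_add_eq_sum, Nat.cast_sum, Nat.cast_mul, mul_sum]
        rw [sum_comm]
        exact sum_congr rfl fun j _ ↦ sum_congr rfl fun i _ ↦ by ring
    _ = ∑ j ∈ range (m + 1),
          (assocStirlingSecond m j : R) * if j = ℓ then (-1 : R) ^ ℓ else 0 := by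
        simp only [sum_neg_one_pow_mul_choose_mul_choose]
    _ = _ := by
        simp only [mul_ite, mul_zero, sum_ite_eq', mem_range]
        split_ifs with hℓ
        · ring
        · simp [assocStirlingSecond_eq_zero_of_lt (by omega : m < ℓ)]

theorem stirling2_diagonal_recurrence' (n k : ℕ) (h : k < n) :
    (S n k : ℚ) = (n.choose k : ℚ) *
      ∑ ℓ ∈ Finset.Icc 1 (n - k),
        (-1 : ℚ) ^ ℓ * ((k.choose ℓ : ℚ) / ((n - k + ℓ).choose (n - k) : ℚ)) *
          ∑ i ∈ Finset.range (ℓ + 1),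
            (-1 : ℚ) ^ i * ((n - k + ℓ).choose (ℓ - i) : ℚ) * (S (n - k + i) i : ℚ) := by
  obtain ⟨m, rfl⟩ : ∃ m, n = m + k := ⟨n - k, by omega⟩
  simp only [S_eq_stirlingSecond, Nat.add_sub_cancel, sum_neg_one_pow_mul_choose_mul_stirlingSecond,
    mul_sum]
  rw [stirlingSecond_add_eq_sum, range_eq_Ico, sum_eq_sum_Ico_succ_bot (by omega),
    assocStirlingSecond_zero_right (by omega), zero_mul, zero_add, Ico_add_one_right_eq_Icc]
  push_cast
  refine sum_congr rfl fun ℓ _ ↦ ?_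
  have hchoose := congrArg (Nat.cast : ℕ → ℚ) (Nat.add_choose_mul_choose m k ℓ)
  push_cast at hchoose
  have hpos : ((m + ℓ).choose m : ℚ) ≠ 0 := by exact_mod_cast (Nat.choose_pos (by omega)).ne'
  have hsign : ((-1 : ℚ) ^ ℓ) ^ 2 = 1 := by rw [← pow_mul, pow_mul', neg_one_sq, one_pow]
  field_simp
  rw [hsign]
  linear_combination -(assocStirlingSecond m ℓ : ℚ) * hchoose
end

section
/- For all integers m ≥ 0, the m-th derivative of the function f(x) = (e^x − 1)/x (with f(0)=1) equals ∫_1^e u^{x-1} (ln u)^m du for every real x; in particular, f is absolutely monotonic on ℝ, i.e., f^{(m)}(x) ≥ 0 for all m ≥ 0 and all real x. -/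
/-!
`f x = ∫₀¹ exp (x t) dt` is the moment generating function of the uniform distribution on
`[0, 1]`. As the mgf of a bounded random variable it is smooth, with `m`-th derivative
`∫₀¹ tᵐ exp (x t) dt ≥ 0`, and the substitution `u = exp t` turns this into
`∫₁ᵉ u^(x-1) (log u)ᵐ du`.
-/

open intervalIntegral

/-- The function `(e^x - 1)/x`, extended by `1` at `x = 0`. -/
noncomputable def f : ℝ → ℝ := fun x => if x = 0 then 1 else (Real.exp x - 1) / x

open MeasureTheory ProbabilityTheory Real Set

section BoundedMGF

variable {Ω : Type*} [MeasurableSpace Ω] {μ : Measure Ω} [IsFiniteMeasure μ] {X : Ω → ℝ}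
  {a b : ℝ}

lemma integrableExpSet_eq_univ_of_ae_mem_Icc (hX : AEMeasurable X μ)
    (hab : ∀ᵐ ω ∂μ, X ω ∈ Icc a b) : integrableExpSet X μ = univ :=
  eq_univ_of_forall fun _ ↦ integrable_exp_mul_of_mem_Icc hX hab

lemma iteratedDeriv_mgf_of_ae_mem_Icc (hX : AEMeasurable X μ)
    (hab : ∀ᵐ ω ∂μ, X ω ∈ Icc a b) (n : ℕ) (t : ℝ) :
    iteratedDeriv n (mgf X μ) t = μ[fun ω ↦ X ω ^ n * exp (t * X ω)] :=
  iteratedDeriv_mgf (by simp [integrableExpSet_eq_univ_of_ae_mem_Icc hX hab]) n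

end BoundedMGF

lemma integral_exp_mul_zero_one (x : ℝ) :
    ∫ t in (0 : ℝ)..1, exp (x * t) = f x := by
  unfold f
  split_ifs with hx
  · simp [hx]
  · rw [integral_comp_mul_left (fun t ↦ exp t) hx, integral_exp]
    simp [div_eq_inv_mul]

lemma f_eq_mgf_uniform : f = mgf id (volume.restrict (Ioc 0 1)) := by
  funext x
  rw [← integral_exp_mul_zero_one, integral_of_le zero_le_one]
  rfl

lemma integral_exp_image {g : ℝ → ℝ} (hg : ContinuousOn g (Ioi 0)) (a b : ℝ) :
    ∫ u in exp a..exp b, g u = ∫ t in a..b, g (exp t) * exp t :=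
  (integral_comp_mul_deriv' (fun t _ ↦ hasDerivAt_exp t) continuous_exp.continuousOn
    (hg.mono (image_subset_iff.2 fun t _ ↦ exp_pos t))).symm

lemma integral_rpow_mul_log_pow (x : ℝ) (m : ℕ) (a b : ℝ) :
    ∫ u in exp a..exp b, u ^ (x - 1) * log u ^ m = ∫ t in a..b, t ^ m * exp (x * t) := by
  have hcont : ContinuousOn (fun u : ℝ ↦ u ^ (x - 1) * log u ^ m) (Ioi 0) := fun u hu ↦
    ((continuousAt_rpow_const _ _ (Or.inl (ne_of_gt hu))).mul
      ((continuousAt_log (ne_of_gt hu)).pow m)).continuousWithinAt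
  rw [integral_exp_image hcont]
  refine integral_congr fun t _ ↦ ?_
  simp only [rpow_def_of_pos (exp_pos t), log_exp]
  rw [mul_right_comm, ← exp_add]
  ring_nf

/-- The `m`-th derivative of `(e^x - 1)/x` equals `∫_1^e u^{x-1} (ln u)^m du`; in particular
`f` is absolutely monotonic on `ℝ`. -/
theorem expm1_div_x_iteratedDeriv (m : ℕ) (x : ℝ) :
    iteratedDeriv m f x = ∫ u in (1 : ℝ)..(Real.exp 1), u ^ (x - 1) * (Real.log u) ^ m ∧
    0 ≤ iteratedDeriv m f x := by
  have hderiv : iteratedDeriv m f x = ∫ t in (0 : ℝ)..1, t ^ m * exp (x * t) := by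
    rw [f_eq_mgf_uniform, integral_of_le zero_le_one,
      iteratedDeriv_mgf_of_ae_mem_Icc (a := 0) (b := 1) aemeasurable_id ?_ m x]
    · rfl
    · exact (ae_restrict_mem measurableSet_Ioc).mono fun t ht ↦ Ioc_subset_Icc_self ht
  refine ⟨by rw [hderiv, ← integral_rpow_mul_log_pow, exp_zero], ?_⟩
  rw [hderiv]
  exact integral_nonneg zero_le_one fun t ht ↦ mul_nonneg (pow_nonneg ht.1 m) (exp_pos _).le
end

section
/- For every fixed integer k ≥ 1 and every integer ℓ ≥ 0, the inequality [S(ℓ+k+2,k)/C(ℓ+k+2,k)] · [S(ℓ+k,k)/C(ℓ+k,k)] ≥ [S(ℓ+k+1,k)/C(ℓ+k+1,k)]² holds; that is, the sequence n ↦ S(n+k,k)/C(n+k,k) is logarithmically convex in n. -/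
/-!
Up to the factor `n! / (n + k)!`, `k! S(n + k, k)` is the `k`-th forward difference of `x ^ (n + k)`
at `0`. Since the `k`-th forward difference of a function is its `k`-th derivative averaged over
the unit cube, `S(n + k, k) / C(n + k, k) = n! k! S(n + k, k) / (n + k)!` is the `n`-th moment
`∫_{[0,1]^k} (u₁ + ⋯ + u_k)^n du` of the sum of `k` independent uniform variables. Moments of a
positive measure are log-convex by Cauchy–Schwarz; here Cauchy–Schwarz is applied one coordinate
at a time, by induction on `k`, to the moments shifted by `s ≥ 0`.
-/

open MeasureTheory fwdDiff
open scoped Nat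

theorem sq_integral_le_integral_mul_integral_of_sq_le_mul {α : Type*} [MeasurableSpace α]
    {μ : Measure α} {f g h : α → ℝ} (hf : Integrable f μ) (hg : Integrable g μ)
    (hh : Integrable h μ) (hf0 : 0 ≤ᵐ[μ] f) (hh0 : 0 ≤ᵐ[μ] h) (hgfh : ∀ᵐ x ∂μ, g x ^ 2 ≤ f x * h x) :
    (∫ x, g x ∂μ) ^ 2 ≤ (∫ x, f x ∂μ) * ∫ x, h x ∂μ := by
  -- The integral of `f t² - 2 g t + h` is a quadratic in `t` that is nonnegative,
  -- so its discriminant is nonpositive.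
  have hquad (t : ℝ) :
      0 ≤ (∫ x, f x ∂μ) * (t * t) + (-2 * ∫ x, g x ∂μ) * t + ∫ x, h x ∂μ := by
    have hint : 0 ≤ ∫ x, (f x * (t * t) + -2 * t * g x + h x) ∂μ := by
      refine integral_nonneg_of_ae ?_
      filter_upwards [hf0, hh0, hgfh] with x hfx hhx hgx
      simp only [Pi.zero_apply] at hfx hhx ⊢
      rcases hfx.eq_or_lt with hfx | hfx
      · have hg0 : g x = 0 := by
          rw [← hfx, zero_mul] at hgx
          exact (pow_eq_zero_iff two_ne_zero).mp (le_antisymm hgx (sq_nonneg _))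
        rw [← hfx, hg0]
        linarith
      · -- `f (f t² - 2 g t + h) = (f t - g)² + (f h - g²)`
        nlinarith [sq_nonneg (f x * t - g x)]
    have hfg : Integrable (fun x ↦ f x * (t * t) + -2 * t * g x) μ :=
      (hf.mul_const _).add (hg.const_mul _)
    rw [integral_add hfg hh, integral_add (hf.mul_const _) (hg.const_mul _), integral_mul_const,
      integral_const_mul] at hint
    linarith
  have := discrim_le_zero hquad
  rw [discrim] at this
  nlinarith

theorem fwdDiff_iter_succ_apply {M G : Type*} [AddCommMonoid M] [AddCommGroup G] (h : M)
    (f : M → G) (n : ℕ) (y : M) :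
    Δ_[h] ^[n + 1] f y = Δ_[h] ^[n] f (y + h) - Δ_[h] ^[n] f y := by
  rw [Function.iterate_succ_apply']
  rfl

theorem Continuous.fwdDiff_iter {M G : Type*} [AddCommMonoid M] [TopologicalSpace M]
    [ContinuousAdd M] [AddCommGroup G] [TopologicalSpace G] [ContinuousSub G] {f : M → G}
    (hf : Continuous f) (h : M) (n : ℕ) : Continuous (Δ_[h] ^[n] f) := by
  induction n with
  | zero => exact hf
  | succ n ih =>
    rw [Function.iterate_succ']
    exact (ih.comp (continuous_add_const h)).sub ih

theorem hasDerivAt_fwdDiff_iter {𝕜 F : Type*} [NontriviallyNormedField 𝕜] [NormedAddCommGroup F]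
    [NormedSpace 𝕜 F] {f f' : 𝕜 → F} (hf : ∀ x, HasDerivAt f (f' x) x) (h : 𝕜) (n : ℕ)
    (x : 𝕜) : HasDerivAt (Δ_[h] ^[n] f) (Δ_[h] ^[n] f' x) x := by
  induction n generalizing x with
  | zero => exact hf x
  | succ n ih =>
    rw [Function.iterate_succ_apply', Function.iterate_succ_apply']
    exact ((ih (x + h)).comp_add_const x h).sub (ih x)

theorem integral_fwdDiff_iter {E : Type*} [NormedAddCommGroup E] [NormedSpace ℝ E]
    [CompleteSpace E] {f f' : ℝ → E} (hf : ∀ x, HasDerivAt f (f' x) x) (hf' : Continuous f')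
    (h : ℝ) (n : ℕ) (a : ℝ) :
    ∫ x in a..a + h, Δ_[h] ^[n] f' x = Δ_[h] ^[n + 1] f a := by
  rw [intervalIntegral.integral_eq_sub_of_hasDerivAt (fun x _ ↦ hasDerivAt_fwdDiff_iter hf h n x)
    ((hf'.fwdDiff_iter h n).intervalIntegrable _ _), fwdDiff_iter_succ_apply]

theorem fwdDiff_iter_succ_id_mul {R : Type*} [CommRing R] (f : R → R) (n : ℕ) (y : R) :
    Δ_[1] ^[n + 1] (fun x ↦ x * f x) y =
      y * Δ_[1] ^[n + 1] f y + (n + 1) * Δ_[1] ^[n] f (y + 1) := by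
  induction n generalizing y with
  | zero => simp only [fwdDiff_iter_succ_apply, Function.iterate_zero, id]; push_cast; ring
  | succ n ih =>
    rw [fwdDiff_iter_succ_apply, ih, ih, fwdDiff_iter_succ_apply _ f (n + 1),
      fwdDiff_iter_succ_apply _ f n (y + 1)]
    push_cast
    ring

theorem fwdDiff_iter_pow_apply_zero {R : Type*} [CommRing R] (m k : ℕ) :
    Δ_[1] ^[k] (fun x : R ↦ x ^ m) 0 = k ! * S m k := by
  induction m generalizing k with
  | zero =>
    cases k with
    | zero => simp [S]
    | succ k => rw [fwdDiff_iter_pow_eq_zero_of_lt k.succ_pos]; simp [S]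
  | succ m ih =>
    cases k with
    | zero => simp [S]
    | succ k =>
      have hshift := fwdDiff_iter_succ_apply (1 : R) (fun x ↦ x ^ m) k 0
      simp only [_root_.pow_succ', fwdDiff_iter_succ_id_mul, zero_mul, zero_add] at hshift ⊢
      have hk := ih (k + 1)
      simp only [S]
      push_cast [Nat.factorial_succ] at hk ⊢
      linear_combination (k + 1 : R) * (hk + ih k - hshift)

/-- `cubeMoment n k s = ∫_{[0,1]^k} (s + u₁ + ⋯ + u_k)^n du`, computed one coordinate at a time. -/
noncomputable def cubeMoment (n : ℕ) : ℕ → ℝ → ℝ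
  | 0, s => s ^ n
  | k + 1, s => ∫ u in s..s + 1, cubeMoment n k u

theorem cubeMoment_eq_fwdDiff_iter (n k : ℕ) :
    cubeMoment n k = Δ_[1] ^[k] (fun x ↦ (n ! / (n + k)! : ℝ) * x ^ (n + k)) := by
  induction k with
  | zero => funext s; simp [cubeMoment, Nat.factorial_ne_zero]
  | succ k ih =>
    have hderiv (x : ℝ) : HasDerivAt (fun x ↦ (n ! / (n + (k + 1))! : ℝ) * x ^ (n + (k + 1)))
        ((n ! / (n + k)! : ℝ) * x ^ (n + k)) x := by
      refine ((hasDerivAt_pow _ x).const_mul _).congr_deriv ?_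
      rw [← add_assoc, Nat.factorial_succ]
      push_cast
      field_simp
    funext s
    rw [cubeMoment, ih, integral_fwdDiff_iter hderiv (by fun_prop)]

theorem continuous_cubeMoment (n k : ℕ) : Continuous (cubeMoment n k) := by
  rw [cubeMoment_eq_fwdDiff_iter]
  exact Continuous.fwdDiff_iter (by fun_prop) 1 k

theorem cubeMoment_apply_zero (n k : ℕ) :
    cubeMoment n k 0 = S (n + k) k / (n + k).choose k := by
  have hsmul : (fun x : ℝ ↦ (n ! / (n + k)! : ℝ) * x ^ (n + k))
      = (n ! / (n + k)! : ℝ) • fun x ↦ x ^ (n + k) := rfl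
  rw [cubeMoment_eq_fwdDiff_iter, hsmul, fwdDiff_iter_const_smul, Pi.smul_apply, smul_eq_mul,
    fwdDiff_iter_pow_apply_zero, Nat.cast_choose ℝ (Nat.le_add_left k n), Nat.add_sub_cancel]
  field_simp

theorem cubeMoment_nonneg (n k : ℕ) {s : ℝ} (hs : 0 ≤ s) : 0 ≤ cubeMoment n k s := by
  induction k generalizing s with
  | zero => exact pow_nonneg hs n
  | succ k ih =>
    exact intervalIntegral.integral_nonneg (by linarith) fun u hu ↦ ih (hs.trans hu.1)

theorem cubeMoment_sq_le (n k : ℕ) {s : ℝ} (hs : 0 ≤ s) :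
    cubeMoment (n + 1) k s ^ 2 ≤ cubeMoment n k s * cubeMoment (n + 2) k s := by
  induction k generalizing s with
  | zero => exact le_of_eq (by simp only [cubeMoment]; ring)
  | succ k ih =>
    simp only [cubeMoment, intervalIntegral.integral_of_le (by linarith : s ≤ s + 1)]
    have hpos : ∀ u ∈ Set.Ioc s (s + 1), 0 ≤ u := fun u hu ↦ hs.trans hu.1.le
    refine sq_integral_le_integral_mul_integral_of_sq_le_mul
      ((continuous_cubeMoment _ _).integrableOn_Ioc) ((continuous_cubeMoment _ _).integrableOn_Ioc)
      ((continuous_cubeMoment _ _).integrableOn_Ioc) ?_ ?_ ?_ <;>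
    refine ae_restrict_of_forall_mem measurableSet_Ioc fun u hu ↦ ?_
    · exact cubeMoment_nonneg _ _ (hpos u hu)
    · exact cubeMoment_nonneg _ _ (hpos u hu)
    · exact ih (hpos u hu)

theorem stirling2_ratio_log_convex_general (k : ℕ) (ℓ : ℕ) :
    ((S (ℓ + k + 1) k : ℚ) / ((ℓ + k + 1).choose k : ℚ)) ^ 2 ≤
      ((S (ℓ + k + 2) k : ℚ) / ((ℓ + k + 2).choose k : ℚ)) *
        ((S (ℓ + k) k : ℚ) / ((ℓ + k).choose k : ℚ)) := by
  have h := cubeMoment_sq_le ℓ k le_rfl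
  rw [cubeMoment_apply_zero, cubeMoment_apply_zero, cubeMoment_apply_zero,
    add_right_comm ℓ 1 k, add_right_comm ℓ 2 k, mul_comm] at h
  rw [← Rat.cast_le (K := ℝ)]
  push_cast
  exact h

/-- The sequence `n ↦ S(n+k,k)/C(n+k,k)` is logarithmically convex. -/
theorem stirling2_ratio_log_convex (k : ℕ) (hk : 1 ≤ k) (ℓ : ℕ) :
    ((S (ℓ + k + 1) k : ℚ) / ((ℓ + k + 1).choose k : ℚ)) ^ 2 ≤
      ((S (ℓ + k + 2) k : ℚ) / ((ℓ + k + 2).choose k : ℚ)) *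
        ((S (ℓ + k) k : ℚ) / ((ℓ + k).choose k : ℚ)) :=
  stirling2_ratio_log_convex_general k ℓ
end

section
/- Define 𝔖₁(n,k) = S(n,k−1)² − S(n,k−2)·S(n,k) for n ≥ k ≥ 2. Then for any fixed n ≥ k ≥ 2, the sequence m ↦ 𝔖₁(n+m, k+m) is strictly increasing in m ≥ 0. -/
/-- `𝔖₁(n,k) = S(n,k-1)² - S(n,k-2)·S(n,k)`. -/
def S1 (n k : ℕ) : ℤ := (S n (k - 1) : ℤ) ^ 2 - (S n (k - 2) : ℤ) * (S n k : ℤ)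

theorem mul_le_mul_of_mul_le_sq {R : Type*} [CommSemiring R] [LinearOrder R]
    [IsStrictOrderedRing R] {a b c d : R} (hd : 0 ≤ d) (hb : 0 < b) (hc : 0 < c)
    (hac : a * c ≤ b ^ 2) (hbd : b * d ≤ c ^ 2) : a * d ≤ b * c := by
  refine le_of_mul_le_mul_right ?_ (mul_pos hb hc)
  calc a * d * (b * c) = (a * c) * (b * d) := by ring
    _ ≤ b ^ 2 * c ^ 2 := mul_le_mul hac hbd (by positivity) (by positivity)
    _ = b * c * (b * c) := by ring

theorem S_succ_succ (n k : ℕ) : S (n + 1) (k + 1) = (k + 1) * S n (k + 1) + S n k := rfl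

theorem S_eq_zero_of_lt {n k : ℕ} (h : n < k) : S n k = 0 := by
  induction n generalizing k with
  | zero => obtain ⟨k, rfl⟩ := Nat.exists_eq_succ_of_ne_zero h.ne'; rfl
  | succ n ih =>
    obtain ⟨k, rfl⟩ := Nat.exists_eq_succ_of_ne_zero (by omega : k ≠ 0)
    rw [S_succ_succ, ih (by omega), ih (by omega), mul_zero]

theorem S_pos {n k : ℕ} (hk : 1 ≤ k) (hkn : k ≤ n) : 0 < S n k := by
  induction n generalizing k with
  | zero => omega
  | succ n ih =>
    obtain ⟨k, rfl⟩ := Nat.exists_eq_succ_of_ne_zero (by omega : k ≠ 0)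
    rw [S_succ_succ]
    rcases Nat.eq_zero_or_pos k with rfl | hk
    · rcases Nat.eq_zero_or_pos n with rfl | hn
      · decide
      · exact Nat.add_pos_left (Nat.mul_pos one_pos (ih le_rfl hn)) _
    · exact Nat.add_pos_right _ (ih hk (by omega))

theorem S1_add_two (n i : ℕ) : S1 n (i + 2) = (S n (i + 1) : ℤ) ^ 2 - S n i * S n (i + 2) := rfl

theorem S1_succ_add_three (n i : ℕ) :
    S1 (n + 1) (i + 3) = S1 n (i + 2) + (S n (i + 2) : ℤ) ^ 2 + (i + 1) * (i + 3) * S1 n (i + 3)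
      + (i + 3) * ((S n (i + 1) : ℤ) * S n (i + 2) - S n i * S n (i + 3)) := by
  simp only [S1_add_two, S_succ_succ]
  push_cast
  ring

theorem S_mul_le_mul_of_S1_nonneg {n i : ℕ} (h₂ : 0 ≤ S1 n (i + 2)) (h₃ : 0 ≤ S1 n (i + 3)) :
    S n i * S n (i + 3) ≤ S n (i + 1) * S n (i + 2) := by
  rcases lt_or_ge n (i + 2) with hn | hn
  · rw [S_eq_zero_of_lt (by omega : n < i + 3), mul_zero]
    exact Nat.zero_le _
  · rw [S1_add_two, sub_nonneg] at h₂ h₃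
    exact mul_le_mul_of_mul_le_sq (Nat.zero_le _) (S_pos (by omega) (by omega))
      (S_pos (by omega) hn) (by exact_mod_cast h₂) (by exact_mod_cast h₃)

theorem S1_add_sq_le_S1_succ {n i : ℕ} (h₂ : 0 ≤ S1 n (i + 2)) (h₃ : 0 ≤ S1 n (i + 3)) :
    S1 n (i + 2) + (S n (i + 2) : ℤ) ^ 2 ≤ S1 (n + 1) (i + 3) := by
  have hcross : (0 : ℤ) ≤ S n (i + 1) * S n (i + 2) - S n i * S n (i + 3) := by
    rw [sub_nonneg]
    exact_mod_cast S_mul_le_mul_of_S1_nonneg h₂ h₃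
  rw [S1_succ_add_three]
  have := mul_nonneg (by positivity : (0 : ℤ) ≤ (i + 1) * (i + 3)) h₃
  have := mul_nonneg (by positivity : (0 : ℤ) ≤ i + 3) hcross
  linarith

theorem S1_nonneg (n i : ℕ) : 0 ≤ S1 n (i + 2) := by
  induction n generalizing i with
  | zero => simp [S1_add_two, S]
  | succ n ih =>
    rcases i with _ | i
    · simpa [S1_add_two, S] using sq_nonneg _
    · calc (0 : ℤ) ≤ S1 n (i + 2) + (S n (i + 2) : ℤ) ^ 2 :=
          add_nonneg (ih i) (sq_nonneg _)
        _ ≤ S1 (n + 1) (i + 3) := S1_add_sq_le_S1_succ (ih i) (ih (i + 1))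

theorem S1_lt_S1_succ {n i : ℕ} (h : i + 2 ≤ n) : S1 n (i + 2) < S1 (n + 1) (i + 3) := by
  have hc : (0 : ℤ) < S n (i + 2) := by exact_mod_cast S_pos (by omega) h
  calc S1 n (i + 2) < S1 n (i + 2) + (S n (i + 2) : ℤ) ^ 2 := by simpa using pow_pos hc 2
    _ ≤ S1 (n + 1) (i + 3) := S1_add_sq_le_S1_succ (S1_nonneg n i) (S1_nonneg n (i + 1))

/-- For fixed `n ≥ k ≥ 2`, the sequence `m ↦ 𝔖₁(n+m, k+m)` is strictly increasing. -/
theorem S1_diagonal_strictMono (n k : ℕ) (h2 : 2 ≤ k) (hkn : k ≤ n) :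
    StrictMono fun m : ℕ => S1 (n + m) (k + m) := by
  apply strictMono_nat_of_lt_succ
  intro m
  obtain ⟨i, rfl⟩ := Nat.exists_eq_add_of_le' h2
  simpa only [Nat.add_right_comm _ 2, ← add_assoc] using S1_lt_S1_succ (n := n + m) (by omega)
end

section
/- For n ≥ k ≥ 1, the Bell polynomial identity B_{n,k}(1/2, 1/3, …, 1/(n−k+2)) = (n!/(n+k)!) · Σ_{i=0}^{k} (-1)^{k-i} · C(n+k, k−i) · S(n+i, i) holds. -/
/-- The partial Bell polynomial `B_{n,k}(x_1, …, x_{n-k+1})`, evaluated at `x : ℕ → ℚ` where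
`x i` plays the role of `x_i`.  The sum is over tuples `(ℓ_1, …, ℓ_n)` of nonnegative integers
(each necessarily at most `n`) with `∑ i·ℓ_i = n` and `∑ ℓ_i = k`. -/
def BellB (n k : ℕ) (x : ℕ → ℚ) : ℚ :=
  ∑ ℓ ∈ Finset.univ.filter (fun ℓ : Fin n → Fin (n + 1) =>
      (∑ i, (i.1 + 1) * (ℓ i).1) = n ∧ (∑ i, (ℓ i).1) = k),
    (n.factorial : ℚ) / ((∏ i, ((ℓ i).1.factorial) : ℕ) : ℚ) *
      ∏ i, (x (i.1 + 1) / ((i.1 + 1).factorial : ℚ)) ^ (ℓ i).1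

/-
With `x_m = 1 / (m + 1)`, the exponential generating function `∑_{m ≥ 1} x_m t^m / m!` is
`f = (e^t - 1 - t) / t`, and `B_{n,k}(x) = n!/k! · [t^n] f^k` by the multinomial theorem.
So `[t^n] f^k = [t^(n+k)] ((e^t - 1) - t)^k`; expanding binomially and using
`[t^N] (e^t - 1)^i = i! S(N, i) / N!` gives the formula. That last identity is the Stirling
recurrence, read off coefficientwise from
`((e^t - 1)^(i+1))' = (i+1) ((e^t - 1)^(i+1) + (e^t - 1)^i)`.
-/

open Finset PowerSeries Nat

section

variable {R : Type*}

theorem coeff_pow_eq_of_coeff_eq [CommRing R] {f g : R⟦X⟧} {n : ℕ}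
    (h : ∀ m ≤ n, coeff m f = coeff m g) (k : ℕ) : coeff n (f ^ k) = coeff n (g ^ k) := by
  have hfg : X ^ (n + 1) ∣ f - g :=
    X_pow_dvd_iff.2 fun m hm => by rw [map_sub, h m (by omega), sub_self]
  rw [← sub_eq_zero, ← map_sub]
  exact X_pow_dvd_iff.1 (hfg.trans (sub_dvd_pow_sub_pow f g k)) n (by omega)

theorem coeff_sum_C_mul_X_pow_pow {ι : Type*} [CommSemiring R] [DecidableEq ι] (s : Finset ι)
    (a : ι → R) (e : ι → ℕ) (n k : ℕ) :
    coeff n ((∑ i ∈ s, C (a i) * X ^ e i) ^ k) =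
      ∑ ℓ ∈ (piAntidiag s k).filter (fun ℓ => ∑ i ∈ s, e i * ℓ i = n),
        multinomial s ℓ * ∏ i ∈ s, a i ^ ℓ i := by
  rw [sum_pow_eq_sum_piAntidiag, map_sum, sum_filter]
  refine sum_congr rfl fun ℓ _ => ?_
  have hmon : ∏ i ∈ s, (C (a i) * X ^ e i) ^ ℓ i
      = C (∏ i ∈ s, a i ^ ℓ i) * X ^ (∑ i ∈ s, e i * ℓ i) := by
    simp only [mul_pow, prod_mul_distrib, map_prod, map_pow, ← pow_mul, prod_pow_eq_pow_sum]
  rw [hmon, ← map_natCast (C (R := R)), ← mul_assoc, ← map_mul, coeff_C_mul_X_pow]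
  simp only [eq_comm]

theorem coeff_mk_eq_coeff_sum_fin [CommSemiring R] (a : ℕ → R) {n m : ℕ}
    (hm : m ≤ n) :
    coeff m (mk fun j => if j = 0 then 0 else a j) =
      coeff m (∑ i : Fin n, C (a (i + 1)) * X ^ (i.1 + 1)) := by
  rw [coeff_mk, map_sum]
  simp only [coeff_C_mul_X_pow]
  rw [Fin.sum_univ_eq_sum_range (fun i => if m = i + 1 then a (i + 1) else 0)]
  rcases m with _ | m
  · simp
  · simp [show ¬ n ≤ m by omega]

theorem coeff_sub_X_pow [CommRing R] (f : R⟦X⟧) (n k : ℕ) :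
    coeff (n + k) ((f - X) ^ k) =
      ∑ i ∈ range (k + 1), (-1) ^ (k - i) * k.choose i * coeff (n + i) (f ^ i) := by
  rw [sub_eq_add_neg, add_pow, map_sum]
  refine sum_congr rfl fun i hi => ?_
  have hterm : f ^ i * (-X) ^ (k - i) * (k.choose i : R⟦X⟧)
      = C ((-1 : R) ^ (k - i) * k.choose i) * (f ^ i * X ^ (k - i)) := by
    simp only [map_mul, map_pow, map_neg, map_one, map_natCast]
    ring
  rw [hterm, coeff_C_mul, show n + k = n + i + (k - i) by grind, coeff_mul_X_pow]

end

theorem le_of_sum_succ_mul_eq {n : ℕ} {ℓ : Fin n → ℕ} (h : ∑ i, (i.1 + 1) * ℓ i = n)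
    (i : Fin n) : ℓ i ≤ n :=
  h ▸ (Nat.le_mul_of_pos_left _ i.1.succ_pos).trans
    (single_le_sum (f := fun i : Fin n => (i.1 + 1) * ℓ i) (by simp) (mem_univ i))

theorem bellB_eq_coeff_pow (n k : ℕ) (x : ℕ → ℚ) :
    BellB n k x = n ! / k ! * coeff n ((mk fun m => if m = 0 then 0 else x m / m !) ^ k) := by
  rw [coeff_pow_eq_of_coeff_eq (fun m hm => coeff_mk_eq_coeff_sum_fin _ hm),
    coeff_sum_C_mul_X_pow_pow, mul_sum, BellB]
  refine sum_nbij (fun ℓ i => (ℓ i : ℕ)) ?_ ?_ ?_ ?_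
  · intro ℓ hℓ
    simp_all [mem_piAntidiag]
  · intro ℓ _ ℓ' _ h
    funext i
    exact Fin.ext (congrFun h i)
  · intro ℓ hℓ
    simp only [coe_filter, mem_piAntidiag, mem_univ, Set.mem_ofPred_eq] at hℓ
    refine ⟨fun i => ⟨ℓ i, Nat.lt_succ_of_le (le_of_sum_succ_mul_eq hℓ.2 i)⟩, ?_, rfl⟩
    simpa using ⟨hℓ.2, hℓ.1.1⟩
  · intro ℓ hℓ
    simp only [mem_filter, mem_univ, true_and] at hℓ
    rw [← hℓ.2, ← multinomial_spec univ fun i => (ℓ i : ℕ)]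
    have : (multinomial univ fun i => (ℓ i : ℕ) : ℚ) ≠ 0 :=
      mod_cast (multinomial_pos _ _).ne'
    push_cast
    field_simp

theorem S_eq_stirlingSecond_s17 : S = stirlingSecond := by
  funext n k
  induction n generalizing k with
  | zero => cases k <;> rfl
  | succ n ih => cases k <;> simp [S, stirlingSecond_succ_succ, ih]

theorem coeff_exp_sub_one_pow (N i : ℕ) :
    coeff N ((exp ℚ - 1) ^ i) = (i ! : ℚ) * stirlingSecond N i / N ! := by
  induction N generalizing i with
  | zero => cases i <;> simp [coeff_zero_eq_constantCoeff_apply]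
  | succ N ih =>
    cases i with
    | zero => simp
    | succ i =>
      have hderiv : d⁄dX ℚ ((exp ℚ - 1) ^ (i + 1))
          = (i + 1) • ((exp ℚ - 1) ^ (i + 1) + (exp ℚ - 1) ^ i) := by
        rw [derivative_pow, map_sub, derivative_exp, derivative_one, nsmul_eq_mul]
        push_cast
        ring
      have h := congrArg (coeff N) hderiv
      rw [coeff_derivative, map_nsmul, map_add, ih, ih, nsmul_eq_mul] at h
      rw [stirlingSecond_succ_succ]
      simp only [factorial_succ] at h ⊢
      have : (N ! : ℚ) ≠ 0 := by positivity
      push_cast at h ⊢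
      field_simp at h ⊢
      linear_combination h

theorem X_mul_mk_eq_exp_sub_one_sub_X :
    X * mk (fun m => if m = 0 then 0 else 1 / ((m : ℚ) + 1) / m !) = exp ℚ - 1 - X := by
  ext (_ | _ | m)
  · simp
  · simp [coeff_succ_X_mul]
  · rw [coeff_succ_X_mul, coeff_mk, if_neg m.succ_ne_zero]
    simp [coeff_one, coeff_X, factorial_succ m.succ]
    field_simp

theorem choose_mul_factorial_div (n k i : ℕ) (hi : i ≤ k) :
    (k.choose i : ℚ) * i ! / k ! = ((n + k).choose (k - i) : ℚ) * (n + i) ! / (n + k) ! := by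
  rw [cast_choose ℚ hi, cast_choose ℚ (by omega : k - i ≤ n + k),
    show n + k - (k - i) = n + i by omega]
  field_simp

theorem bellB_half_third_general (n k : ℕ) :
    BellB n k (fun i => 1 / ((i : ℚ) + 1)) =
      (n.factorial : ℚ) / ((n + k).factorial : ℚ) *
        ∑ i ∈ Finset.range (k + 1),
          (-1 : ℚ) ^ (k - i) * ((n + k).choose (k - i) : ℚ) * (S (n + i) i : ℚ) := by
  have hcoeff : coeff n ((mk fun m => if m = 0 then 0 else 1 / ((m : ℚ) + 1) / m !) ^ k)
      = ∑ i ∈ range (k + 1),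
          (-1 : ℚ) ^ (k - i) * k.choose i * (i ! * S (n + i) i / (n + i) !) := by
    rw [← coeff_X_pow_mul _ k n, ← mul_pow, X_mul_mk_eq_exp_sub_one_sub_X, coeff_sub_X_pow,
      S_eq_stirlingSecond_s17]
    simp_rw [coeff_exp_sub_one_pow]
  rw [bellB_eq_coeff_pow, hcoeff, mul_sum, mul_sum]
  refine sum_congr rfl fun i hi => ?_
  have hchoose := choose_mul_factorial_div n k i (by simpa [Nat.lt_succ_iff] using hi)
  field_simp at hchoose ⊢
  linear_combination (S (n + i) i : ℚ) * hchoose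

theorem bellB_half_third (n k : ℕ) (hk : 1 ≤ k) (hkn : k ≤ n) :
    BellB n k (fun i => 1 / ((i : ℚ) + 1)) =
      (n.factorial : ℚ) / ((n + k).factorial : ℚ) *
        ∑ i ∈ Finset.range (k + 1),
          (-1 : ℚ) ^ (k - i) * ((n + k).choose (k - i) : ℚ) * (S (n + i) i : ℚ) :=
  bellB_half_third_general n k
end

section
/- For integers n ≥ k ≥ 0, S(n,k)/C(n,k) equals the n−k-th derivative at 0 of the function x ↦ ((e^x − 1)/x)^k (with value 1^k at x = 0); equivalently, S(n,k) = C(n,k) · lim_{x→0} d^{n−k}/dx^{n−k} [((e^x−1)/x)^k]. -/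
open Real
open scoped Nat

theorem deriv_exp_sub_one_pow_succ (k : ℕ) :
    deriv (fun x : ℝ => (exp x - 1) ^ (k + 1)) =
      fun x => (k + 1) * ((exp x - 1) ^ (k + 1) + (exp x - 1) ^ k) := by
  funext x
  have := (((hasDerivAt_exp x).sub_const 1).fun_pow (k + 1)).deriv
  simp only [Nat.cast_add, Nat.cast_one, add_tsub_cancel_right] at this
  rw [this]
  ring

theorem iteratedDeriv_exp_sub_one_pow_zero (n k : ℕ) :
    iteratedDeriv n (fun x : ℝ => (exp x - 1) ^ k) 0 = k ! * S n k := by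
  induction n generalizing k with
  | zero => cases k <;> simp [S]
  | succ n ih =>
    cases k with
    | zero => simp [S, iteratedDeriv_succ']
    | succ k =>
      rw [iteratedDeriv_succ', deriv_exp_sub_one_pow_succ,
        iteratedDeriv_const_mul _ (by fun_prop), iteratedDeriv_fun_add (by fun_prop) (by fun_prop),
        ih, ih]
      simp only [S, Nat.factorial_succ]
      push_cast
      ring

theorem iteratedDeriv_pow_mul_zero {𝕜 : Type*} [NontriviallyNormedField 𝕜] {f : 𝕜 → 𝕜}
    {n k : ℕ} (hkn : k ≤ n) (hf : ContDiffAt 𝕜 n f 0) :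
    iteratedDeriv n (fun x => x ^ k * f x) 0 = n.choose k * k ! * iteratedDeriv (n - k) f 0 := by
  rw [iteratedDeriv_fun_mul (by fun_prop) hf, Finset.sum_eq_single_of_mem k
    (Finset.mem_range.2 (Nat.lt_succ_of_le hkn))]
  · simp only [iteratedDeriv_fun_pow_zero, if_pos]
  · intro i _ hik
    simp only [iteratedDeriv_fun_pow_zero, if_neg hik, Nat.cast_zero, mul_zero, zero_mul]

theorem AnalyticAt.dslope {𝕜 E : Type*} [NontriviallyNormedField 𝕜] [NormedAddCommGroup E]
    [NormedSpace 𝕜 E] {f : 𝕜 → E} {a : 𝕜} (hf : AnalyticAt 𝕜 f a) :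
    AnalyticAt 𝕜 (dslope f a) a :=
  let ⟨_, hp⟩ := hf
  hp.has_fpower_series_dslope_fslope.analyticAt

theorem dslope_exp_sub_one_zero (x : ℝ) :
    dslope (fun x => exp x - 1) 0 x = if x = 0 then 1 else (exp x - 1) / x := by
  split_ifs with hx
  · subst hx
    rw [dslope_same, deriv_sub_const, Real.deriv_exp, exp_zero]
  · rw [dslope_of_ne _ hx, slope_def_field]
    simp

/-- `S(n,k) = C(n,k) ·` (the `(n-k)`-th derivative at `0` of `((e^x - 1)/x)^k`, the function
being extended by its limiting value `1^k` at `x = 0`). -/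
theorem stirling2_eq_iteratedDeriv (n k : ℕ) (h : k ≤ n) :
    (S n k : ℝ) = (n.choose k : ℝ) *
      iteratedDeriv (n - k)
        (fun x : ℝ => (if x = 0 then 1 else (Real.exp x - 1) / x) ^ k) 0 := by
  simp only [← dslope_exp_sub_one_zero]
  set g := dslope (fun x : ℝ => exp x - 1) 0
  have hfactor : (fun x : ℝ => (exp x - 1) ^ k) = fun x => x ^ k * g x ^ k := by
    funext x
    have : x * g x = exp x - 1 := by simpa using sub_smul_dslope (fun x : ℝ => exp x - 1) 0 x
    rw [← mul_pow, this]
  have hg : ContDiffAt ℝ n (fun x => g x ^ k) 0 :=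
    ((analyticAt_rexp.sub analyticAt_const).dslope.pow k).contDiffAt
  have hderiv := iteratedDeriv_exp_sub_one_pow_zero n k
  rw [hfactor, iteratedDeriv_pow_mul_zero h hg] at hderiv
  apply mul_left_cancel₀ (Nat.cast_ne_zero.2 k.factorial_ne_zero : (k ! : ℝ) ≠ 0)
  linear_combination -hderiv
end
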